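/- If a monomial system f: F_q^n → F_q^n is a fixed point system, then its Booleanization T(f): F_2^n → F_2^n is a fixed point system. -/

import Mathlib

/-- The monomial dynamical system with exponent matrix `A`. -/
def monomialMap {K : Type*} [CommRing K] {n : ℕ} (A : Matrix (Fin n) (Fin n) ℕ)
    (x : Fin n → K) : Fin n → K := fun i => ∏ j, x j ^ A i j

/-- The exponent matrix of the Booleanization `T(f)`. -/
def boolMat {n : ℕ} (A : Matrix (Fin n) (Fin n) ℕ) : Matrix (Fin n) (Fin n) ℕ :=
  fun i j => if 0 < A i j then 1 else 0

/-- A fixed point system: every periodic point is a fixed point. -/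
def IsFixedPointSystem {X : Type*} (g : X → X) : Prop :=
  ∀ x, (∃ t, 0 < t ∧ g^[t] x = x) → g x = x

/-!
Over `𝔽₂` every element is idempotent, so `T(f)` and `f` have the same formula there, and
`𝔽₂ = {0, 1}` embeds multiplicatively into `F_q`. Monomial maps commute with multiplicative maps,
so `T(f)` is conjugate to the restriction of `f` to `{0, 1}ⁿ`, and a periodic point of `T(f)` is
sent to a periodic, hence fixed, point of `f`.
-/

open Function

theorem IsFixedPointSystem.of_semiconj {X Y : Type*} {g : X → X} {f : Y → Y} {e : X → Y}
    (he : Injective e) (h : Semiconj e g f) (hf : IsFixedPointSystem f) :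
    IsFixedPointSystem g := by
  rintro x ⟨t, ht, hx⟩
  apply he
  rw [h x]
  exact hf (e x) ⟨t, ht, by rw [← h.iterate_right t x, hx]⟩

theorem monomialMap_map {K L : Type*} [CommRing K] [CommRing L] {n : ℕ}
    (A : Matrix (Fin n) (Fin n) ℕ) (φ : K →* L) (x : Fin n → K) :
    monomialMap A (φ ∘ x) = φ ∘ monomialMap A x := by
  funext i
  simp only [monomialMap, comp_apply, map_prod, map_pow]

theorem monomialMap_boolMat {K : Type*} [CommRing K] (hK : ∀ a : K, IsIdempotentElem a) {n : ℕ}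
    (A : Matrix (Fin n) (Fin n) ℕ) : monomialMap (K := K) (boolMat A) = monomialMap A := by
  funext x i
  refine Finset.prod_congr rfl fun j _ => ?_
  rcases Nat.eq_zero_or_pos (A i j) with h | h
  · simp [boolMat, h]
  · rw [boolMat, if_pos h, pow_one, (hK (x j)).pow_eq h.ne']

theorem ZMod.eq_zero_or_eq_one_of_two (a : ZMod 2) : a = 0 ∨ a = 1 := by
  revert a
  decide

theorem ZMod.isIdempotentElem_two (a : ZMod 2) : IsIdempotentElem a := by
  rcases ZMod.eq_zero_or_eq_one_of_two a with rfl | rfl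
  exacts [.zero, .one]

def ZMod.twoToMonoidWithZero (M : Type*) [MulZeroOneClass M] : ZMod 2 →* M where
  toFun a := if a = 0 then 0 else 1
  map_one' := by simp
  map_mul' a b := by
    rcases ZMod.eq_zero_or_eq_one_of_two a with rfl | rfl <;>
      rcases ZMod.eq_zero_or_eq_one_of_two b with rfl | rfl <;> simp

theorem ZMod.twoToMonoidWithZero_injective (M : Type*) [MulZeroOneClass M] [Nontrivial M] :
    Injective (ZMod.twoToMonoidWithZero M) := by
  intro a b h
  rcases ZMod.eq_zero_or_eq_one_of_two a with rfl | rfl <;>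
    rcases ZMod.eq_zero_or_eq_one_of_two b with rfl | rfl <;> simp_all [ZMod.twoToMonoidWithZero]

theorem stmt13_general {F : Type*} [Field F] {n : ℕ}
    (A : Matrix (Fin n) (Fin n) ℕ)
    (hf : IsFixedPointSystem (monomialMap (K := F) A)) :
    IsFixedPointSystem (monomialMap (K := ZMod 2) (boolMat A)) := by
  refine hf.of_semiconj (ZMod.twoToMonoidWithZero_injective F).comp_left fun x => ?_
  rw [monomialMap_boolMat ZMod.isIdempotentElem_two, monomialMap_map]

theorem stmt13 {F : Type*} [Field F] [Fintype F] {n : ℕ}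
    (A : Matrix (Fin n) (Fin n) ℕ)
    (hf : IsFixedPointSystem (monomialMap (K := F) A)) :
    IsFixedPointSystem (monomialMap (K := ZMod 2) (boolMat A)) :=
  stmt13_general A hf
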